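/- Let R, Z, u^t, u^θ : (p₁,p₂) × (t₁,t₂) → ℝ be smooth with R > 0, and set J = R'_p Z'_t − R'_t Z'_p and κ = R'_t Z''_{tt} − Z'_t R''_{tt} (primes denote partial derivatives). Assume at every point: (a) R'_t² + Z'_t² = 1; (b) u^t ∂u^t/∂t − R R'_t (u^θ)² = 0; (c) ∂u^θ/∂t + (2R'_t/R) u^θ = 0; (d) J ≠ 0 and ∂u^t/∂t + (R'_t/R + J'_t/J) u^t = 0; (e) κ (u^t)² + R Z'_t (u^θ)² = |J|⁻¹; and the normalizations u^t > 0 and (u^t)² + R²(u^θ)² = 1. Then there exist a smooth function α : (p₁,p₂) → (0,∞) and a smooth function b : (p₁,p₂) → ℝ such that for all (p,t): |b(p)| < R(p,t), u^θ = b(p)/R², u^t = √(R² − b(p)²)/R, √(R² − b(p)²)·|J| = α(p)², and κ R (R² − b(p)²) + b(p)² Z'_t = R³ √(R² − b(p)²)/α(p)². -/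

import Mathlib

/-- Partial derivative in the second variable (`t`). -/
noncomputable def pdt (F : ℝ → ℝ → ℝ) (p t : ℝ) : ℝ := deriv (fun s => F p s) t

/-- Partial derivative in the first variable (`p`). -/
noncomputable def pdp (F : ℝ → ℝ → ℝ) (p t : ℝ) : ℝ := deriv (fun s => F s t) p

/-- Second partial derivative in the second variable. -/
noncomputable def pdtt (F : ℝ → ℝ → ℝ) (p t : ℝ) : ℝ := deriv (fun s => pdt F p s) t

/-- The Jacobian `J = R'_p Z'_t − R'_t Z'_p`. -/
noncomputable def Jac (R Z : ℝ → ℝ → ℝ) (p t : ℝ) : ℝ :=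
  pdp R p t * pdt Z p t - pdt R p t * pdp Z p t

/-- The curvature `κ = R'_t Z''_{tt} − Z'_t R''_{tt}` of the curve `t ↦ (R(p,t), Z(p,t))`. -/
noncomputable def curv (R Z : ℝ → ℝ → ℝ) (p t : ℝ) : ℝ :=
  pdt R p t * pdtt Z p t - pdt Z p t * pdtt R p t

/-! Along each generatrix, equation (c) makes `R² u^θ` and equation (d) makes `u^t R J` a first
integral, so both depend on `p` alone: they are `b(p)` and `±α(p)²`. The normalization then reads
`R u^t = √(R² − b²)`, which turns the first integrals into the stated formulas, and (e) multiplied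
by `R³` becomes the last identity. -/

open Set

section PartialDerivatives

variable {F : ℝ → ℝ → ℝ} {p t : ℝ}

lemma hasDerivAt_slice_snd (hF : DifferentiableAt ℝ (fun v : ℝ × ℝ => F v.1 v.2) (p, t)) :
    HasDerivAt (fun s => F p s) (fderiv ℝ (fun v : ℝ × ℝ => F v.1 v.2) (p, t) (0, 1)) t :=
  hF.hasFDerivAt.comp_hasDerivAt_of_eq t ((hasDerivAt_const t p).prodMk (hasDerivAt_id t)) rfl

lemma hasDerivAt_slice_fst (hF : DifferentiableAt ℝ (fun v : ℝ × ℝ => F v.1 v.2) (p, t)) :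
    HasDerivAt (fun s => F s t) (fderiv ℝ (fun v : ℝ × ℝ => F v.1 v.2) (p, t) (1, 0)) p :=
  hF.hasFDerivAt.comp_hasDerivAt_of_eq p ((hasDerivAt_id p).prodMk (hasDerivAt_const p t)) rfl

lemma hasDerivAt_pdt (hF : DifferentiableAt ℝ (fun v : ℝ × ℝ => F v.1 v.2) (p, t)) :
    HasDerivAt (fun s => F p s) (pdt F p t) t :=
  (hasDerivAt_slice_snd hF).differentiableAt.hasDerivAt

variable {U : Set (ℝ × ℝ)}

lemma ContDiffOn.pdt (hF : ContDiffOn ℝ (⊤ : ℕ∞) (fun v : ℝ × ℝ => F v.1 v.2) U)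
    (hU : IsOpen U) : ContDiffOn ℝ (⊤ : ℕ∞) (fun v : ℝ × ℝ => pdt F v.1 v.2) U :=
  ((hF.fderiv_of_isOpen hU le_rfl).clm_apply contDiffOn_const).congr fun v hv =>
    (hasDerivAt_slice_snd ((hF.contDiffAt (hU.mem_nhds hv)).differentiableAt (by simp))).deriv

lemma ContDiffOn.pdp (hF : ContDiffOn ℝ (⊤ : ℕ∞) (fun v : ℝ × ℝ => F v.1 v.2) U)
    (hU : IsOpen U) : ContDiffOn ℝ (⊤ : ℕ∞) (fun v : ℝ × ℝ => pdp F v.1 v.2) U :=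
  ((hF.fderiv_of_isOpen hU le_rfl).clm_apply contDiffOn_const).congr fun v hv =>
    (hasDerivAt_slice_fst ((hF.contDiffAt (hU.mem_nhds hv)).differentiableAt (by simp))).deriv

lemma ContDiffOn.jac {R Z : ℝ → ℝ → ℝ}
    (hR : ContDiffOn ℝ (⊤ : ℕ∞) (fun v : ℝ × ℝ => R v.1 v.2) U)
    (hZ : ContDiffOn ℝ (⊤ : ℕ∞) (fun v : ℝ × ℝ => Z v.1 v.2) U) (hU : IsOpen U) :
    ContDiffOn ℝ (⊤ : ℕ∞) (fun v : ℝ × ℝ => Jac R Z v.1 v.2) U :=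
  ((hR.pdp hU).mul (hZ.pdt hU)).sub ((hR.pdt hU).mul (hZ.pdp hU))

lemma ContDiffOn.slice_fst {n : WithTop ℕ∞} {s t : Set ℝ} {t₀ : ℝ}
    (hF : ContDiffOn ℝ n (fun v : ℝ × ℝ => F v.1 v.2) (s ×ˢ t)) (ht₀ : t₀ ∈ t) :
    ContDiffOn ℝ n (fun p => F p t₀) s :=
  hF.comp (contDiff_id.prodMk contDiff_const).contDiffOn fun _ hp => ⟨hp, ht₀⟩

end PartialDerivatives

lemma IsOpen.is_const_of_hasDerivAt_zero {f : ℝ → ℝ} {s : Set ℝ} (hs : IsOpen s)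
    (hs' : IsPreconnected s) (hf : ∀ x ∈ s, HasDerivAt f 0 x) {x y : ℝ} (hx : x ∈ s)
    (hy : y ∈ s) : f x = f y :=
  hs.is_const_of_deriv_eq_zero hs'
    (fun z hz => (hf z hz).differentiableAt.differentiableWithinAt) (fun z hz => (hf z hz).deriv)
    hx hy

section FirstIntegrals

variable {r w u j : ℝ → ℝ} {r' w' u' j' t : ℝ}

lemma hasDerivAt_sq_mul_eq_zero (hr : HasDerivAt r r' t) (hw : HasDerivAt w w' t)
    (hr0 : r t ≠ 0) (hode : w' + 2 * r' / r t * w t = 0) :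
    HasDerivAt (fun s => r s ^ 2 * w s) 0 t := by
  refine ((hr.pow 2).mul hw).congr_deriv ?_
  field_simp at hode
  simp only [Pi.pow_apply, Nat.cast_ofNat]
  linear_combination r t * hode

lemma hasDerivAt_mul_mul_eq_zero (hu : HasDerivAt u u' t) (hr : HasDerivAt r r' t)
    (hj : HasDerivAt j j' t) (hr0 : r t ≠ 0) (hj0 : j t ≠ 0)
    (hode : u' + (r' / r t + j' / j t) * u t = 0) :
    HasDerivAt (fun s => u s * r s * j s) 0 t := by
  refine ((hu.mul hr).mul hj).congr_deriv ?_
  field_simp at hode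
  simp only [Pi.mul_apply]
  linear_combination hode

end FirstIntegrals

lemma sqrt_sq_sub_sq_eq {R u w : ℝ} (hR : 0 < R) (hu : 0 < u) (hnorm : u ^ 2 + R ^ 2 * w ^ 2 = 1) :
    √(R ^ 2 - (R ^ 2 * w) ^ 2) = R * u := by
  rw [show R ^ 2 - (R ^ 2 * w) ^ 2 = (R * u) ^ 2 by linear_combination (-R ^ 2) * hnorm]
  exact Real.sqrt_sq (mul_pos hR hu).le

lemma gavrilov_pointwise {R u w J κ z b α : ℝ} (hR : 0 < R) (hu : 0 < u) (hJ : J ≠ 0)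
    (hb : R ^ 2 * w = b) (hα : α ^ 2 = |u * R * J|) (hnorm : u ^ 2 + R ^ 2 * w ^ 2 = 1)
    (he : κ * u ^ 2 + R * z * w ^ 2 = |J|⁻¹) :
    |b| < R ∧ w = b / R ^ 2 ∧ u = √(R ^ 2 - b ^ 2) / R ∧ √(R ^ 2 - b ^ 2) * |J| = α ^ 2 ∧
      κ * R * (R ^ 2 - b ^ 2) + b ^ 2 * z = R ^ 3 * √(R ^ 2 - b ^ 2) / α ^ 2 := by
  subst hb
  have hsqrt := sqrt_sq_sub_sq_eq hR hu hnorm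
  have hα' : α ^ 2 = R * u * |J| := by
    rw [hα, abs_mul, abs_of_pos (mul_pos hu hR)]
    ring
  refine ⟨?_, by field_simp, by rw [hsqrt]; field_simp, by rw [hsqrt, hα'], ?_⟩
  · refine abs_lt_of_sq_lt_sq ?_ hR.le
    nlinarith [mul_pos hR hu]
  · have hcancel : R ^ 3 * (R * u) / (R * u * |J|) = R ^ 3 * |J|⁻¹ := by
      field_simp
    rw [hsqrt, hα', hcancel, ← he]
    linear_combination (-R ^ 3 * κ) * hnorm

theorem axisymmetric_gavrilov_structure_general (p₁ p₂ t₁ t₂ : ℝ) (R Z ut uθ : ℝ → ℝ → ℝ)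
    (hR : ContDiffOn ℝ (⊤ : ℕ∞) (fun v : ℝ × ℝ => R v.1 v.2)
      (Set.Ioo p₁ p₂ ×ˢ Set.Ioo t₁ t₂))
    (hZ : ContDiffOn ℝ (⊤ : ℕ∞) (fun v : ℝ × ℝ => Z v.1 v.2)
      (Set.Ioo p₁ p₂ ×ˢ Set.Ioo t₁ t₂))
    (hut : ContDiffOn ℝ (⊤ : ℕ∞) (fun v : ℝ × ℝ => ut v.1 v.2)
      (Set.Ioo p₁ p₂ ×ˢ Set.Ioo t₁ t₂))
    (huθ : ContDiffOn ℝ (⊤ : ℕ∞) (fun v : ℝ × ℝ => uθ v.1 v.2)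
      (Set.Ioo p₁ p₂ ×ˢ Set.Ioo t₁ t₂))
    (hRpos : ∀ p ∈ Set.Ioo p₁ p₂, ∀ t ∈ Set.Ioo t₁ t₂, 0 < R p t)
    -- (c) θ-component of the geodesic equation
    (hc : ∀ p ∈ Set.Ioo p₁ p₂, ∀ t ∈ Set.Ioo t₁ t₂,
      pdt uθ p t + (2 * pdt R p t / R p t) * uθ p t = 0)
    -- (d) nonvanishing Jacobian and the divergence relation
    (hd : ∀ p ∈ Set.Ioo p₁ p₂, ∀ t ∈ Set.Ioo t₁ t₂, Jac R Z p t ≠ 0)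
    (hd' : ∀ p ∈ Set.Ioo p₁ p₂, ∀ t ∈ Set.Ioo t₁ t₂,
      pdt ut p t + (pdt R p t / R p t + pdt (Jac R Z) p t / Jac R Z p t) * ut p t = 0)
    -- (e) second fundamental form relation
    (he : ∀ p ∈ Set.Ioo p₁ p₂, ∀ t ∈ Set.Ioo t₁ t₂,
      curv R Z p t * (ut p t) ^ 2 + R p t * pdt Z p t * (uθ p t) ^ 2 = |Jac R Z p t|⁻¹)
    -- normalizations
    (hpos : ∀ p ∈ Set.Ioo p₁ p₂, ∀ t ∈ Set.Ioo t₁ t₂, 0 < ut p t)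
    (hnorm : ∀ p ∈ Set.Ioo p₁ p₂, ∀ t ∈ Set.Ioo t₁ t₂,
      (ut p t) ^ 2 + (R p t) ^ 2 * (uθ p t) ^ 2 = 1) :
    ∃ α b : ℝ → ℝ, ContDiffOn ℝ (⊤ : ℕ∞) α (Set.Ioo p₁ p₂) ∧
      ContDiffOn ℝ (⊤ : ℕ∞) b (Set.Ioo p₁ p₂) ∧
      (∀ p ∈ Set.Ioo p₁ p₂, 0 < α p) ∧
      ∀ p ∈ Set.Ioo p₁ p₂, ∀ t ∈ Set.Ioo t₁ t₂,
        |b p| < R p t ∧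
        uθ p t = b p / (R p t) ^ 2 ∧
        ut p t = Real.sqrt ((R p t) ^ 2 - (b p) ^ 2) / R p t ∧
        Real.sqrt ((R p t) ^ 2 - (b p) ^ 2) * |Jac R Z p t| = (α p) ^ 2 ∧
        curv R Z p t * R p t * ((R p t) ^ 2 - (b p) ^ 2) + (b p) ^ 2 * pdt Z p t
          = (R p t) ^ 3 * Real.sqrt ((R p t) ^ 2 - (b p) ^ 2) / (α p) ^ 2 := by
  obtain hempty | ⟨t₀, ht₀⟩ := (Ioo t₁ t₂).eq_empty_or_nonempty
  · exact ⟨1, 0, contDiffOn_const, contDiffOn_const, fun _ _ => one_pos, by simp [hempty]⟩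
  have hU : IsOpen (Ioo p₁ p₂ ×ˢ Ioo t₁ t₂) := isOpen_Ioo.prod isOpen_Ioo
  have hJ := hR.jac hZ hU
  have hdiff {F : ℝ → ℝ → ℝ} (hF : ContDiffOn ℝ (⊤ : ℕ∞) (fun v : ℝ × ℝ => F v.1 v.2)
      (Ioo p₁ p₂ ×ˢ Ioo t₁ t₂)) {p t : ℝ} (hp : p ∈ Ioo p₁ p₂) (ht : t ∈ Ioo t₁ t₂) :
      HasDerivAt (fun s => F p s) (pdt F p t) t :=
    hasDerivAt_pdt ((hF.contDiffAt (hU.mem_nhds ⟨hp, ht⟩)).differentiableAt (by simp))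
  have hb_const : ∀ p ∈ Ioo p₁ p₂, ∀ t ∈ Ioo t₁ t₂,
      R p t ^ 2 * uθ p t = R p t₀ ^ 2 * uθ p t₀ := fun p hp t ht =>
    isOpen_Ioo.is_const_of_hasDerivAt_zero isPreconnected_Ioo (fun s hs =>
      hasDerivAt_sq_mul_eq_zero (hdiff hR hp hs) (hdiff huθ hp hs) (hRpos p hp s hs).ne'
        (hc p hp s hs)) ht ht₀
  have hα_const : ∀ p ∈ Ioo p₁ p₂, ∀ t ∈ Ioo t₁ t₂,
      ut p t * R p t * Jac R Z p t = ut p t₀ * R p t₀ * Jac R Z p t₀ := fun p hp t ht =>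
    isOpen_Ioo.is_const_of_hasDerivAt_zero isPreconnected_Ioo (fun s hs =>
      hasDerivAt_mul_mul_eq_zero (hdiff hut hp hs) (hdiff hR hp hs) (hdiff hJ hp hs)
        (hRpos p hp s hs).ne' (hd p hp s hs) (hd' p hp s hs)) ht ht₀
  have hc₀ : ∀ p ∈ Ioo p₁ p₂, ut p t₀ * R p t₀ * Jac R Z p t₀ ≠ 0 := fun p hp =>
    mul_ne_zero (mul_pos (hpos p hp t₀ ht₀) (hRpos p hp t₀ ht₀)).ne' (hd p hp t₀ ht₀)
  refine ⟨fun p => √|ut p t₀ * R p t₀ * Jac R Z p t₀|, fun p => R p t₀ ^ 2 * uθ p t₀,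
    ((((hut.slice_fst ht₀).mul (hR.slice_fst ht₀)).mul (hJ.slice_fst ht₀)).abs hc₀).sqrt
      fun p hp => abs_ne_zero.2 (hc₀ p hp),
    ((hR.slice_fst ht₀).pow 2).mul (huθ.slice_fst ht₀),
    fun p hp => Real.sqrt_pos.2 (abs_pos.2 (hc₀ p hp)), fun p hp t ht => ?_⟩
  refine gavrilov_pointwise (hRpos p hp t ht) (hpos p hp t ht) (hd p hp t ht)
    (hb_const p hp t ht) ?_ (hnorm p hp t ht) (he p hp t ht)
  rw [Real.sq_sqrt (abs_nonneg _), hα_const p hp t ht]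

/-- Theorem 6.1: for a normalized axisymmetric Gavrilov flow (equations
(a)–(e) with `u^t > 0` and `(u^t)² + R²(u^θ)² = 1`) there exist smooth functions
`α(p) > 0` and `b(p)` such that `|b| < R`, `u^θ = b/R²`, `u^t = √(R²−b²)/R`,
`√(R²−b²)·|J| = α²`, and `κR(R²−b²) + b²Z'_t = R³√(R²−b²)/α²`. -/
theorem axisymmetric_gavrilov_structure (p₁ p₂ t₁ t₂ : ℝ) (R Z ut uθ : ℝ → ℝ → ℝ)
    (hR : ContDiffOn ℝ (⊤ : ℕ∞) (fun v : ℝ × ℝ => R v.1 v.2)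
      (Set.Ioo p₁ p₂ ×ˢ Set.Ioo t₁ t₂))
    (hZ : ContDiffOn ℝ (⊤ : ℕ∞) (fun v : ℝ × ℝ => Z v.1 v.2)
      (Set.Ioo p₁ p₂ ×ˢ Set.Ioo t₁ t₂))
    (hut : ContDiffOn ℝ (⊤ : ℕ∞) (fun v : ℝ × ℝ => ut v.1 v.2)
      (Set.Ioo p₁ p₂ ×ˢ Set.Ioo t₁ t₂))
    (huθ : ContDiffOn ℝ (⊤ : ℕ∞) (fun v : ℝ × ℝ => uθ v.1 v.2)
      (Set.Ioo p₁ p₂ ×ˢ Set.Ioo t₁ t₂))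
    (hRpos : ∀ p ∈ Set.Ioo p₁ p₂, ∀ t ∈ Set.Ioo t₁ t₂, 0 < R p t)
    -- (a) arc-length parametrization
    (ha : ∀ p ∈ Set.Ioo p₁ p₂, ∀ t ∈ Set.Ioo t₁ t₂,
      (pdt R p t) ^ 2 + (pdt Z p t) ^ 2 = 1)
    -- (b) t-component of the geodesic equation
    (hb : ∀ p ∈ Set.Ioo p₁ p₂, ∀ t ∈ Set.Ioo t₁ t₂,
      ut p t * pdt ut p t - R p t * pdt R p t * (uθ p t) ^ 2 = 0)
    -- (c) θ-component of the geodesic equation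
    (hc : ∀ p ∈ Set.Ioo p₁ p₂, ∀ t ∈ Set.Ioo t₁ t₂,
      pdt uθ p t + (2 * pdt R p t / R p t) * uθ p t = 0)
    -- (d) nonvanishing Jacobian and the divergence relation
    (hd : ∀ p ∈ Set.Ioo p₁ p₂, ∀ t ∈ Set.Ioo t₁ t₂, Jac R Z p t ≠ 0)
    (hd' : ∀ p ∈ Set.Ioo p₁ p₂, ∀ t ∈ Set.Ioo t₁ t₂,
      pdt ut p t + (pdt R p t / R p t + pdt (Jac R Z) p t / Jac R Z p t) * ut p t = 0)
    -- (e) second fundamental form relation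
    (he : ∀ p ∈ Set.Ioo p₁ p₂, ∀ t ∈ Set.Ioo t₁ t₂,
      curv R Z p t * (ut p t) ^ 2 + R p t * pdt Z p t * (uθ p t) ^ 2 = |Jac R Z p t|⁻¹)
    -- normalizations
    (hpos : ∀ p ∈ Set.Ioo p₁ p₂, ∀ t ∈ Set.Ioo t₁ t₂, 0 < ut p t)
    (hnorm : ∀ p ∈ Set.Ioo p₁ p₂, ∀ t ∈ Set.Ioo t₁ t₂,
      (ut p t) ^ 2 + (R p t) ^ 2 * (uθ p t) ^ 2 = 1) :
    ∃ α b : ℝ → ℝ, ContDiffOn ℝ (⊤ : ℕ∞) α (Set.Ioo p₁ p₂) ∧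
      ContDiffOn ℝ (⊤ : ℕ∞) b (Set.Ioo p₁ p₂) ∧
      (∀ p ∈ Set.Ioo p₁ p₂, 0 < α p) ∧
      ∀ p ∈ Set.Ioo p₁ p₂, ∀ t ∈ Set.Ioo t₁ t₂,
        |b p| < R p t ∧
        uθ p t = b p / (R p t) ^ 2 ∧
        ut p t = Real.sqrt ((R p t) ^ 2 - (b p) ^ 2) / R p t ∧
        Real.sqrt ((R p t) ^ 2 - (b p) ^ 2) * |Jac R Z p t| = (α p) ^ 2 ∧
        curv R Z p t * R p t * ((R p t) ^ 2 - (b p) ^ 2) + (b p) ^ 2 * pdt Z p t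
          = (R p t) ^ 3 * Real.sqrt ((R p t) ^ 2 - (b p) ^ 2) / (α p) ^ 2 :=
  axisymmetric_gavrilov_structure_general p₁ p₂ t₁ t₂ R Z ut uθ hR hZ hut huθ hRpos hc hd hd' he
    hpos hnorm
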